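/- arXiv:1502.06245 — 2 statements merged into one kernel-verified Lean document; each statement's English description precedes it below -/
import Mathlib

section
/- Let H be a graph property that is hereditary (closed under subgraphs) and closed under disjoint union with K₁. Then for every graph G and every edge e of G, γ_H(G_e) ≤ γ_H(G) + 1, where G_e is the graph obtained from G by subdividing the edge e once. -/
open SimpleGraph

/-- A graph property: a class of finite simple graphs on arbitrary vertex types. -/
abbrev GraphProp := ∀ (V : Type), SimpleGraph V → Prop

/-- Closure under graph isomorphism. -/
def IsoClosed (P : GraphProp) : Prop :=
  ∀ (V W : Type) (G : SimpleGraph V) (H : SimpleGraph W), Nonempty (G ≃g H) → P V G → P W H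

/-- A property is nondegenerate if it contains all edgeless graphs. -/
def Nondegenerate (P : GraphProp) : Prop :=
  IsoClosed P ∧ ∀ (V : Type), P V ⊥

/-- Closed under induced subgraphs. -/
def InducedHereditary (P : GraphProp) : Prop :=
  IsoClosed P ∧ ∀ (V : Type) (G : SimpleGraph V) (s : Set V), P V G → P s (G.induce s)

/-- Closed under all subgraphs. -/
def Hereditary (P : GraphProp) : Prop :=
  InducedHereditary P ∧ ∀ (V : Type) (G G' : SimpleGraph V), G' ≤ G → P V G → P V G'

/-- The graph `G` together with one new isolated vertex. -/
def addK1 {V : Type} (G : SimpleGraph V) : SimpleGraph (V ⊕ Unit) where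
  Adj a b := ∃ x y, a = Sum.inl x ∧ b = Sum.inl y ∧ G.Adj x y
  symm := ⟨by rintro a b ⟨x, y, rfl, rfl, h⟩; exact ⟨y, x, rfl, rfl, h.symm⟩⟩
  loopless := ⟨by rintro a ⟨x, y, rfl, hy, h⟩; simp only [Sum.inl.injEq] at hy; subst hy; exact G.irrefl h⟩

/-- Closure under disjoint union with `K₁`. -/
def ClosedUnderK1 (P : GraphProp) : Prop :=
  ∀ (V : Type) (G : SimpleGraph V), P V G → P (V ⊕ Unit) (addK1 G)

/-- `S` is a dominating set of `G`. -/
def IsDominating {V : Type} (G : SimpleGraph V) (S : Set V) : Prop :=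
  ∀ v ∉ S, ∃ u ∈ S, G.Adj u v

/-- `S` is a dominating set inducing a subgraph with property `P`. -/
def IsDomPSet (P : GraphProp) {V : Type} (G : SimpleGraph V) (S : Set V) : Prop :=
  IsDominating G S ∧ P S (G.induce S)

/-- The domination number with respect to the property `P`. -/
noncomputable def gammaP (P : GraphProp) {V : Type} [Fintype V] (G : SimpleGraph V) : ℕ :=
  sInf (Set.ncard '' {S : Set V | IsDomPSet P G S})

/-- A minimum dominating `P`-set. -/
def IsGammaSet (P : GraphProp) {V : Type} [Fintype V] (G : SimpleGraph V) (S : Set V) : Prop :=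
  IsDomPSet P G S ∧ S.ncard = gammaP P G

/-- The ordinary domination number. -/
noncomputable def gamma {V : Type} [Fintype V] (G : SimpleGraph V) : ℕ :=
  sInf (Set.ncard '' {S : Set V | IsDominating G S})

/-- The graph obtained from `G` by deleting the edge `uv` and replacing it by the
path `u - x₀ - x₁ - ⋯ - x_{t-1} - v` through `t` new vertices. -/
def subdiv {V : Type} (G : SimpleGraph V) (u v : V) (t : ℕ) : SimpleGraph (V ⊕ Fin t) where
  Adj a b := match a, b with
    | Sum.inl a, Sum.inl b => G.Adj a b ∧ ¬((a = u ∧ b = v) ∨ (a = v ∧ b = u))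
    | Sum.inl a, Sum.inr i => (a = u ∧ (i : ℕ) = 0) ∨ (a = v ∧ (i : ℕ) + 1 = t)
    | Sum.inr i, Sum.inl a => (a = u ∧ (i : ℕ) = 0) ∨ (a = v ∧ (i : ℕ) + 1 = t)
    | Sum.inr i, Sum.inr j => (i : ℕ) + 1 = (j : ℕ) ∨ (j : ℕ) + 1 = (i : ℕ)
  symm := ⟨by
    rintro (a | i) (b | j) h
    · exact ⟨h.1.symm, fun hc => h.2 (by tauto)⟩
    · exact h
    · exact h
    · tauto⟩
  loopless := ⟨by
    rintro (a | i) h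
    · exact G.irrefl h.1
    · omega⟩

/-- The private neighbour set `pn_G[x, X] = {y : N[y,G] ∩ X = {x}}`. -/
def pn {V : Type} (G : SimpleGraph V) (X : Set V) (x : V) : Set V :=
  {y | insert y (G.neighborSet y) ∩ X = {x}}

/-- The graph `G` with the vertex `v` deleted. -/
abbrev delVert {V : Type} (G : SimpleGraph V) (v : V) : SimpleGraph {w : V // w ≠ v} :=
  G.induce {w : V | w ≠ v}

/-- An independent set. -/
def IsIndep {V : Type} (G : SimpleGraph V) (S : Set V) : Prop :=
  S.Pairwise fun a b => ¬ G.Adj a b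

/-! Lift a minimum dominating `P`-set `S` of `G` along `Sum.inl` and call the new vertex `x`;
by symmetry `v ∈ S → u ∈ S`. If `u ∈ S`, the lift still dominates unless `v ∉ S` was dominated
only through the deleted edge `uv`, and then `v` can be added, having lost its only neighbour in
`S`. If `u, v ∉ S`, add `x`, whose only neighbours are `u` and `v`. Either way the added vertex is
isolated in the induced subgraph, which is therefore isomorphic to a spanning subgraph of
`G[S] + K₁`. Dominating `P`-sets exist as soon as `P` contains any graph: it then contains all
edgeless graphs, and a maximal independent set dominates. Otherwise both sides are `sInf ∅ = 0`. -/

section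

variable {P : GraphProp}

theorem Hereditary.of_comap_le (hP : Hereditary P) {α β : Type} {H : SimpleGraph α}
    {K : SimpleGraph β} (e : α ≃ β) (hle : K.comap e ≤ H) (hH : P α H) : P β K :=
  hP.1.1 _ _ _ _ ⟨Iso.comap e K⟩ (hP.2 _ _ _ hle hH)

theorem Hereditary.induce_image (hP : Hereditary P) {X Y : Type} {f : X → Y}
    (hf : Function.Injective f) {G : SimpleGraph X} {G' : SimpleGraph Y} (hle : G'.comap f ≤ G)
    {S : Set X} (hS : P S (G.induce S)) : P (f '' S) (G'.induce (f '' S)) :=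
  hP.of_comap_le (Equiv.Set.image f S hf) (fun _ _ h => hle h) hS

theorem Hereditary.induce_insert (hP : Hereditary P) (hK1 : ClosedUnderK1 P) {X : Type}
    {G : SimpleGraph X} {T : Set X} {z : X} (hz : ∀ w ∈ T, ¬ G.Adj z w)
    (hT : P T (G.induce T)) : P ↥(insert z T) (G.induce (insert z T)) := by
  classical
  by_cases hzT : z ∈ T
  · rwa [Set.insert_eq_of_mem hzT]
  refine hP.of_comap_le (Equiv.Set.insert hzT).symm ?_ (hK1 _ _ hT)
  rintro (a | ⟨⟩) (b | ⟨⟩) h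
  · exact ⟨a, b, rfl, rfl, h⟩
  · exact absurd h.symm (hz a a.2)
  · exact absurd h (hz b b.2)
  · exact absurd h (G.loopless.irrefl _)

theorem addK1_bot {V : Type} : addK1 (⊥ : SimpleGraph V) = ⊥ := by
  ext a b
  simp [addK1]

theorem Hereditary.bot (hP : Hereditary P) (hK1 : ClosedUnderK1 P) {W : Type}
    {K : SimpleGraph W} (hK : P W K) (V : Type) [Finite V] : P V ⊥ := by
  have botIso : ∀ {α β : Type}, α ≃ β → (⊥ : SimpleGraph α) ≃g (⊥ : SimpleGraph β) :=
    fun e => ⟨e, by simp⟩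
  induction V using Finite.induction_empty_option with
  | of_equiv e h => exact hP.1.1 _ _ _ _ ⟨botIso e⟩ h
  | h_empty =>
    have hempty : P (∅ : Set W) ⊥ := hP.2 _ _ _ bot_le (hP.1.2 W K ∅ hK)
    exact hP.1.1 _ _ _ _ ⟨botIso (Equiv.equivPEmpty _)⟩ hempty
  | @h_option α _ h =>
    have hadd : P (α ⊕ Unit) ⊥ := addK1_bot (V := α) ▸ hK1 _ _ h
    exact hP.1.1 _ _ _ _ ⟨botIso (Equiv.optionEquivSumPUnit _).symm⟩ hadd

theorem IsIndep.induce_eq_bot {V : Type} {G : SimpleGraph V} {S : Set V} (hS : IsIndep G S) :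
    G.induce S = ⊥ := by
  ext a b
  simpa using fun h => hS a.2 b.2 (fun hab => G.loopless.irrefl _ (Subtype.ext hab ▸ h)) h

theorem exists_isDominating_isIndep {V : Type} [Finite V] (G : SimpleGraph V) :
    ∃ S, IsDominating G S ∧ IsIndep G S := by
  obtain ⟨S, hS, hmax⟩ := (Set.toFinite {S : Set V | IsIndep G S}).exists_maximal
    ⟨∅, Set.pairwise_empty _⟩
  refine ⟨S, fun w hw => ?_, hS⟩
  by_contra! hfree
  have hins : IsIndep G (insert w S) :=
    Set.pairwise_insert.2 ⟨hS, fun s hs _ => ⟨fun h => hfree s hs h.symm, hfree s hs⟩⟩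
  exact hw (hmax hins (Set.subset_insert w S) (Set.mem_insert w S))

theorem exists_isDomPSet (hP : Hereditary P) (hK1 : ClosedUnderK1 P) {W : Type}
    {K : SimpleGraph W} (hK : P W K) {V : Type} [Finite V] (G : SimpleGraph V) :
    ∃ S, IsDomPSet P G S := by
  obtain ⟨S, hdom, hindep⟩ := exists_isDominating_isIndep G
  exact ⟨S, hdom, hindep.induce_eq_bot ▸ hP.bot hK1 hK S⟩

section Subdivision

variable {V : Type} {G : SimpleGraph V} {u v : V} {S : Set V}

theorem subdiv_adj_inl_inl {t : ℕ} {a b : V} :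
    (subdiv G u v t).Adj (.inl a) (.inl b) ↔ G.Adj a b ∧ s(a, b) ≠ s(u, v) := by
  simp [subdiv]

theorem comap_inl_subdiv_le (t : ℕ) : (subdiv G u v t).comap Sum.inl ≤ G :=
  fun _ _ h => h.1

theorem subdiv_one_adj_inr_inl {i : Fin 1} {w : V} :
    (subdiv G u v 1).Adj (.inr i) (.inl w) ↔ w = u ∨ w = v := by
  simp [subdiv, Fin.fin_one_eq_zero i]

theorem subdiv_one_comm : subdiv G u v 1 = subdiv G v u 1 := by
  ext (a | i) (b | j) <;> simp [subdiv, Fin.fin_one_eq_zero] <;> tauto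

theorem IsDominating.exists_subdiv_adj_inl (hS : IsDominating G S) (t : ℕ) {w : V} (hw : w ∉ S)
    (hwu : w = u → v ∉ S) (hwv : w = v → u ∉ S) :
    ∃ s ∈ S, (subdiv G u v t).Adj (.inl s) (.inl w) := by
  obtain ⟨s, hs, hadj⟩ := hS w hw
  refine ⟨s, hs, subdiv_adj_inl_inl.2 ⟨hadj, ?_⟩⟩
  rw [Ne, Sym2.eq_iff]
  rintro (⟨rfl, rfl⟩ | ⟨rfl, rfl⟩)
  exacts [hwv rfl hs, hwu rfl hs]

theorem IsDominating.subdiv_one_of_mem_left (hS : IsDominating G S) (hu : u ∈ S)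
    {T : Set (V ⊕ Fin 1)} (hST : Sum.inl '' S ⊆ T)
    (hv : v ∉ S → Sum.inl v ∈ T ∨ ∃ s ∈ S, G.Adj s v ∧ s ≠ u) :
    IsDominating (subdiv G u v 1) T := by
  rintro (w | i) hw
  · have hwS : w ∉ S := fun h => hw (hST ⟨w, h, rfl⟩)
    by_cases hwv : w = v
    · subst hwv
      obtain hvT | ⟨s, hs, hadj, hsu⟩ := hv hwS
      · exact absurd hvT hw
      exact ⟨.inl s, hST ⟨s, hs, rfl⟩, subdiv_adj_inl_inl.2 ⟨hadj, by rwa [Ne, Sym2.congr_left]⟩⟩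
    · obtain ⟨s, hs, hadj⟩ :=
        hS.exists_subdiv_adj_inl 1 hwS (fun hwu => absurd (hwu ▸ hu) hwS) (absurd · hwv)
      exact ⟨.inl s, hST ⟨s, hs, rfl⟩, hadj⟩
  · exact ⟨.inl u, hST ⟨u, hu, rfl⟩, (subdiv_one_adj_inr_inl.2 (.inl rfl)).symm⟩

theorem IsDominating.subdiv_one_insert_inr (hS : IsDominating G S) (hu : u ∉ S) (hv : v ∉ S) :
    IsDominating (subdiv G u v 1) (insert (.inr 0) (Sum.inl '' S)) := by
  rintro (w | i) hw
  · have hwS : w ∉ S := fun h => hw (Or.inr ⟨w, h, rfl⟩)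
    obtain ⟨s, hs, hadj⟩ := hS.exists_subdiv_adj_inl 1 hwS (fun _ => hv) (fun _ => hu)
    exact ⟨.inl s, Or.inr ⟨s, hs, rfl⟩, hadj⟩
  · exact absurd (Or.inl (by rw [Fin.fin_one_eq_zero i])) hw

theorem IsDomPSet.exists_subdiv_one_of_mem_imp (hP : Hereditary P) (hK1 : ClosedUnderK1 P)
    (hS : IsDomPSet P G S) (hvu : v ∈ S → u ∈ S) :
    ∃ T, IsDomPSet P (subdiv G u v 1) T ∧ T.ncard ≤ S.ncard + 1 := by
  have hPimage : P _ ((subdiv G u v 1).induce (Sum.inl '' S)) :=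
    hP.induce_image Sum.inl_injective (comap_inl_subdiv_le 1) hS.2
  have hcard : (Sum.inl '' S : Set (V ⊕ Fin 1)).ncard = S.ncard :=
    Set.ncard_image_of_injective S Sum.inl_injective
  by_cases hu : u ∈ S
  · by_cases hv : v ∉ S ∧ ∀ s ∈ S, G.Adj s v → s = u
    · refine ⟨insert (.inl v) (Sum.inl '' S), ⟨hS.1.subdiv_one_of_mem_left hu
        (Set.subset_insert _ _) (fun _ => .inl (Set.mem_insert _ _)),
        hP.induce_insert hK1 ?_ hPimage⟩, hcard ▸ Set.ncard_insert_le _ _⟩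
      rintro _ ⟨w, hw, rfl⟩ h
      obtain ⟨hadj, hne⟩ := subdiv_adj_inl_inl.1 h
      obtain rfl := hv.2 w hw hadj.symm
      exact hne Sym2.eq_swap
    · push Not at hv
      exact ⟨Sum.inl '' S, ⟨hS.1.subdiv_one_of_mem_left hu subset_rfl fun hvS => .inr (hv hvS),
        hPimage⟩, by omega⟩
  · have hv : v ∉ S := fun h => hu (hvu h)
    refine ⟨insert (.inr 0) (Sum.inl '' S), ⟨hS.1.subdiv_one_insert_inr hu hv,
      hP.induce_insert hK1 ?_ hPimage⟩, hcard ▸ Set.ncard_insert_le _ _⟩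
    rintro _ ⟨w, hw, rfl⟩ h
    rcases subdiv_one_adj_inr_inl.1 h with rfl | rfl
    exacts [hu hw, hv hw]

theorem IsDomPSet.exists_subdiv_one (hP : Hereditary P) (hK1 : ClosedUnderK1 P)
    (hS : IsDomPSet P G S) (u v : V) :
    ∃ T, IsDomPSet P (subdiv G u v 1) T ∧ T.ncard ≤ S.ncard + 1 := by
  by_cases hvu : v ∈ S → u ∈ S
  · exact hS.exists_subdiv_one_of_mem_imp hP hK1 hvu
  · push Not at hvu
    rw [subdiv_one_comm]
    exact hS.exists_subdiv_one_of_mem_imp hP hK1 fun hu => absurd hu hvu.2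

end Subdivision

section Domination

variable {V : Type} [Fintype V] {G : SimpleGraph V}

theorem gammaP_le {S : Set V} (hS : IsDomPSet P G S) : gammaP P G ≤ S.ncard :=
  Nat.sInf_le ⟨S, hS, rfl⟩

theorem exists_isGammaSet (h : ∃ S, IsDomPSet P G S) : ∃ S, IsGammaSet P G S :=
  Nat.sInf_mem (Set.Nonempty.image (s := {S | IsDomPSet P G S}) Set.ncard h)

theorem gammaP_eq_zero (h : ∀ S, ¬ IsDomPSet P G S) : gammaP P G = 0 := by
  rw [gammaP, Set.eq_empty_of_forall_notMem (s := {S | IsDomPSet P G S}) h, Set.image_empty,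
    Nat.sInf_empty]

end Domination

end

theorem gammaP_subdiv_one_le_general (P : GraphProp) (h1 : Hereditary P) (h2 : ClosedUnderK1 P)
    {V : Type} [Fintype V] (G : SimpleGraph V) (u v : V) :
    gammaP P (subdiv G u v 1) ≤ gammaP P G + 1 := by
  by_cases hP : ∃ (W : Type) (K : SimpleGraph W), P W K
  · obtain ⟨W, K, hK⟩ := hP
    obtain ⟨S, hS, hcard⟩ := exists_isGammaSet (exists_isDomPSet h1 h2 hK G)
    obtain ⟨T, hT, hTcard⟩ := hS.exists_subdiv_one h1 h2 u v
    calc gammaP P (subdiv G u v 1) ≤ T.ncard := gammaP_le hT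
      _ ≤ S.ncard + 1 := hTcard
      _ = gammaP P G + 1 := by rw [hcard]
  · have : gammaP P (subdiv G u v 1) = 0 := gammaP_eq_zero fun S hS => hP ⟨_, _, hS.2⟩
    omega

/-- `γ_H(G_e) ≤ γ_H(G) + 1` for hereditary `H` closed under union with `K₁`. -/
theorem gammaP_subdiv_one_le (P : GraphProp) (h1 : Hereditary P) (h2 : ClosedUnderK1 P)
    {V : Type} [Fintype V] (G : SimpleGraph V) (u v : V) (he : G.Adj u v) :
    gammaP P (subdiv G u v 1) ≤ gammaP P G + 1 :=
  gammaP_subdiv_one_le_general P h1 h2 G u v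
end

section
/- For every graph G with at least one edge, there exist an edge e and t ∈ {1,2,3} such that γ(G_{e,t}) ≠ γ(G); that is, the domination multisubdivision number msd(G) ≤ 3. -/
open SimpleGraph

/-! Let `S` dominate `G` with `uv` replaced by the path `u - x₀ - x₁ - x₂ - v`. Its trace on
`V` together with one endpoint of `uv` dominates `G`, and `S` meets the path, since `x₁` must be
dominated. If `S` meets the path only in `x₀`, then `x₂` forces `v ∈ S`, which dominates `u` in
`G` (symmetrically for `x₂`), and `x₁` dominates no vertex of `G`; so then the trace alone
dominates `G`. Either way `G` has a dominating set smaller than `S`, hence subdividing any edge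
three times raises the domination number. -/

theorem Set.ncard_preimage_inl_add_ncard_preimage_inr {α β : Type*} [Finite α] [Finite β]
    (S : Set (α ⊕ β)) : (Sum.inl ⁻¹' S).ncard + (Sum.inr ⁻¹' S).ncard = S.ncard := by
  have hS : S = Sum.inl '' (Sum.inl ⁻¹' S) ∪ Sum.inr '' (Sum.inr ⁻¹' S) := by
    ext (a | b) <;> simp
  have hdisj : Disjoint (Sum.inl '' (Sum.inl ⁻¹' S)) (Sum.inr '' (Sum.inr ⁻¹' S)) :=
    Set.disjoint_left.2 fun _ ⟨_, _, ha⟩ ⟨_, _, hb⟩ => Sum.inl_ne_inr (ha.trans hb.symm)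
  conv_rhs => rw [hS]
  rw [Set.ncard_union_eq hdisj, Set.ncard_image_of_injective _ Sum.inl_injective,
    Set.ncard_image_of_injective _ Sum.inr_injective]

section subdiv

variable {V : Type} {G : SimpleGraph V} {u v : V} {t : ℕ} {S : Set (V ⊕ Fin t)}

theorem adj_of_subdiv_adj_inl_inl {a b : V} (h : (subdiv G u v t).Adj (Sum.inl a) (Sum.inl b)) :
    G.Adj a b :=
  h.1

theorem subdiv_adj_inr_inl {i : Fin t} {a : V} :
    (subdiv G u v t).Adj (Sum.inr i) (Sum.inl a) ↔
      a = u ∧ (i : ℕ) = 0 ∨ a = v ∧ (i : ℕ) + 1 = t :=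
  Iff.rfl

theorem IsDominating.insert_preimage_inl (hS : IsDominating (subdiv G u v t) S) (huv : G.Adj u v)
    {x : V} (hx : x = u ∨ x = v) : IsDominating G (insert x (Sum.inl ⁻¹' S)) := by
  intro w hw
  rw [Set.mem_insert_iff, not_or] at hw
  obtain ⟨d | i, hd, hdw⟩ := hS _ hw.2
  · exact ⟨d, Set.mem_insert_of_mem _ hd, adj_of_subdiv_adj_inl_inl hdw⟩
  · refine ⟨x, Set.mem_insert _ _, ?_⟩
    rcases subdiv_adj_inr_inl.1 hdw with ⟨rfl, -⟩ | ⟨rfl, -⟩ <;> rcases hx with rfl | rfl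
    exacts [absurd rfl hw.1, huv.symm, huv, absurd rfl hw.1]

end subdiv

section subdivThree

variable {V : Type} {G : SimpleGraph V} {u v : V} {S : Set (V ⊕ Fin 3)}

theorem IsDominating.exists_inr_mem (hS : IsDominating (subdiv G u v 3) S) :
    ∃ i, Sum.inr i ∈ S := by
  by_cases h1 : Sum.inr 1 ∈ S
  · exact ⟨1, h1⟩
  obtain ⟨d | i, hd, hd1⟩ := hS _ h1
  · rcases hd1 with ⟨-, h⟩ | ⟨-, h⟩ <;> simp at h
  · exact ⟨i, hd⟩

theorem IsDominating.inl_right_mem (hS : IsDominating (subdiv G u v 3) S)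
    (h1 : Sum.inr 1 ∉ S) (h2 : Sum.inr 2 ∉ S) : Sum.inl v ∈ S := by
  obtain ⟨d | i, hd, hd2⟩ := hS _ h2
  · rcases subdiv_adj_inr_inl.1 hd2.symm with ⟨-, h⟩ | ⟨rfl, -⟩
    · simp at h
    · exact hd
  · fin_cases i <;> simp_all [subdiv]

theorem IsDominating.inl_left_mem (hS : IsDominating (subdiv G u v 3) S)
    (h0 : Sum.inr 0 ∉ S) (h1 : Sum.inr 1 ∉ S) : Sum.inl u ∈ S := by
  obtain ⟨d | i, hd, hd0⟩ := hS _ h0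
  · rcases subdiv_adj_inr_inl.1 hd0.symm with ⟨rfl, -⟩ | ⟨-, h⟩
    · exact hd
    · simp at h
  · fin_cases i <;> simp_all [subdiv]

theorem IsDominating.preimage_inl (hS : IsDominating (subdiv G u v 3) S) (huv : G.Adj u v)
    (hP : (Sum.inr ⁻¹' S).Subsingleton) : IsDominating G (Sum.inl ⁻¹' S) := by
  intro w hw
  obtain ⟨d | i, hd, hdw⟩ := hS _ hw
  · exact ⟨d, hd, adj_of_subdiv_adj_inl_inl hdw⟩
  have hnot : ∀ j, j ≠ i → Sum.inr j ∉ S := fun j hji hj => hji (hP hj hd)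
  rcases subdiv_adj_inr_inl.1 hdw with ⟨rfl, hi⟩ | ⟨rfl, hi⟩
  · have hv := hS.inl_right_mem (hnot 1 (by omega)) (hnot 2 (by omega))
    exact ⟨v, hv, huv.symm⟩
  · have hu := hS.inl_left_mem (hnot 0 (by omega)) (hnot 1 (by omega))
    exact ⟨u, hu, huv⟩

theorem IsDominating.exists_isDominating_ncard_lt [Finite V] (hS : IsDominating (subdiv G u v 3) S)
    (huv : G.Adj u v) : ∃ D : Set V, IsDominating G D ∧ D.ncard < S.ncard := by
  rw [← Set.ncard_preimage_inl_add_ncard_preimage_inr]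
  obtain ⟨i, hi⟩ := hS.exists_inr_mem
  have hP : 0 < (Sum.inr ⁻¹' S).ncard := (Set.ncard_pos).2 ⟨i, hi⟩
  by_cases hsub : (Sum.inr ⁻¹' S).Subsingleton
  · exact ⟨_, hS.preimage_inl huv hsub, by omega⟩
  · have h2 : 1 < (Sum.inr ⁻¹' S).ncard :=
      Set.one_lt_ncard_iff_nontrivial.2 (Set.not_subsingleton_iff.1 hsub)
    exact ⟨_, hS.insert_preimage_inl huv (Or.inr rfl),
      (Set.ncard_insert_le _ _).trans_lt (by omega)⟩

end subdivThree

theorem gamma_le_ncard {V : Type} [Fintype V] {G : SimpleGraph V} {D : Set V}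
    (hD : IsDominating G D) : gamma G ≤ D.ncard :=
  Nat.sInf_le ⟨D, hD, rfl⟩

theorem exists_isDominating_ncard_eq_gamma {V : Type} [Fintype V] (G : SimpleGraph V) :
    ∃ S, IsDominating G S ∧ S.ncard = gamma G :=
  Nat.sInf_mem (s := Set.ncard '' {S : Set V | IsDominating G S})
    ⟨_, Set.univ, fun _ hv => absurd (Set.mem_univ _) hv, rfl⟩

theorem gamma_lt_gamma_subdiv_three {V : Type} [Fintype V] {G : SimpleGraph V} {u v : V}
    (huv : G.Adj u v) : gamma G < gamma (subdiv G u v 3) := by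
  obtain ⟨S, hS, hcard⟩ := exists_isDominating_ncard_eq_gamma (subdiv G u v 3)
  obtain ⟨D, hD, hDS⟩ := hS.exists_isDominating_ncard_lt huv
  exact hcard ▸ (gamma_le_ncard hD).trans_lt hDS

/-- `msd(G) ≤ 3` for the ordinary domination number. -/
theorem msd_le_three {V : Type} [Fintype V] (G : SimpleGraph V) (hE : G.edgeSet.Nonempty) :
    ∃ (u v : V) (t : ℕ), G.Adj u v ∧ 1 ≤ t ∧ t ≤ 3 ∧
      gamma (subdiv G u v t) ≠ gamma G := by
  obtain ⟨e, he⟩ := hE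
  induction e using Sym2.ind with
  | _ u v => exact ⟨u, v, 3, he, by norm_num, le_rfl, (gamma_lt_gamma_subdiv_three he).ne'⟩
end
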